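/- arXiv:1603.04381 — 3 statements merged into one kernel-verified Lean document; each statement's English description precedes it below -/
import Mathlib

section
/- Let X ⊂ ℝ^d be a compact convex set with nonempty interior, and let f : X → ℝ have a continuous induced ranking rule and (c_α, α)-regular level sets with unique global maximizer x* ∈ X. Let (X_1, …, X_n) be a RankOpt-type process for f on X and let î_n ∈ argmax_{1≤i≤n} f(X_i). Then for every δ ∈ (0,1), with probability at least 1−δ, ‖x* − X_{î_n}‖₂ ≤ C₁ · (ln(1/δ)/n)^{1/(d(1+α)²)}, where C₁ = c_α^{(2+α)/(1+α)} · diam(X)^{1/(1+α)²}. -/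
open MeasureTheory ProbabilityTheory Set
open scoped ENNReal NNReal BigOperators

noncomputable section

/-- Euclidean space `ℝ^d`. -/
abbrev Euc (d : ℕ) := EuclideanSpace ℝ (Fin d)

/-- The uniform probability measure on a set `s` (w.r.t. the ambient volume measure). -/
def unifOn {E : Type*} [MeasureSpace E] (s : Set E) : Measure E :=
  (volume s)⁻¹ • volume.restrict s

instance unifOn.instIsFiniteMeasure {E : Type*} [MeasureSpace E] (s : Set E) :
    IsFiniteMeasure (unifOn s) := by
  constructor
  rw [unifOn, Measure.smul_apply, Measure.restrict_apply_univ, smul_eq_mul]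
  rcases eq_or_ne (volume s) 0 with h | h
  · simp [h]
  rcases eq_or_ne (volume s) ⊤ with h' | h'
  · simp [h, h']
  · rw [ENNReal.inv_mul_cancel h h']; exact ENNReal.one_lt_top

/-- `f` has a continuous induced ranking rule on `Xset`. -/
def HasContinuousRanking {d : ℕ} (Xset : Set (Euc d)) (f : Euc d → ℝ) : Prop :=
  ∃ h : Euc d → ℝ, ContinuousOn h Xset ∧
    ∀ x ∈ Xset, ∀ x' ∈ Xset, Real.sign (f x - f x') = Real.sign (h x - h x')

/-- `f` has `(c, α)`-regular level sets on `Xset` with unique global maximizer `xs`. -/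
def RegularLevelSets {d : ℕ} (Xset : Set (Euc d)) (f : Euc d → ℝ) (xs : Euc d)
    (c α : ℝ) : Prop :=
  xs ∈ Xset ∧ (∀ x ∈ Xset, f x ≤ f xs) ∧ (∀ x ∈ Xset, f x = f xs → x = xs) ∧
    ∀ x ∈ Xset, ∀ x' ∈ Xset, f x = f x' →
      dist xs x ≤ c * dist xs x' ^ ((1 : ℝ) / (1 + α))

/-- Inner radius of a set. -/
def inradius {d : ℕ} (s : Set (Euc d)) : ℝ :=
  sSup {r : ℝ | 0 < r ∧ ∃ x ∈ s, Metric.closedBall x r ⊆ s}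

/-- A RankOpt-type process: `X 0` is uniform on `Xset` and, conditionally on the history
`(X 0, …, X t)`, the point `X (t+1)` is uniform on a measurable set of positive volume squeezed
between the current upper level set and `Xset`. -/
def IsRankOptProcess {d : ℕ} {Ω : Type*} [MeasurableSpace Ω] (P : Measure Ω)
    [IsFiniteMeasure P] (Xset : Set (Euc d)) (f : Euc d → ℝ) (n : ℕ)
    (X : Fin n → Ω → Euc d) : Prop :=
  (∀ i, Measurable (X i)) ∧
  (∀ h0 : 0 < n, P.map (X ⟨0, h0⟩) = unifOn Xset) ∧
  ∀ (t : ℕ) (ht : t + 1 < n),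
    ∀ᵐ ω ∂P, ∃ A : Set (Euc d), MeasurableSet A ∧ 0 < volume A ∧
      {x ∈ Xset | ∀ i : Fin (t + 1), f (X (Fin.castLE ht.le i) ω) ≤ f x} ⊆ A ∧
      A ⊆ Xset ∧
      condDistrib (X ⟨t + 1, ht⟩)
        (fun ω' => fun i : Fin (t + 1) => X (Fin.castLE ht.le i) ω') P
        (fun i : Fin (t + 1) => X (Fin.castLE ht.le i) ω) = unifOn A

/-- A Pure Adaptive Search: `X 0` is uniform on `Xset` and, conditionally on `X t`,
the point `X (t+1)` is uniform on the upper level set of `f (X t)`. -/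
def IsPureAdaptiveSearch {d : ℕ} {Ω : Type*} [MeasurableSpace Ω] (P : Measure Ω)
    [IsFiniteMeasure P] (Xset : Set (Euc d)) (f : Euc d → ℝ) (n : ℕ)
    (X : Fin n → Ω → Euc d) : Prop :=
  (∀ i, Measurable (X i)) ∧
  (∀ h0 : 0 < n, P.map (X ⟨0, h0⟩) = unifOn Xset) ∧
  ∀ (t : ℕ) (ht : t + 1 < n),
    ∀ᵐ ω ∂P,
      condDistrib (X ⟨t + 1, ht⟩) (X ⟨t, by omega⟩) P (X ⟨t, by omega⟩ ω)
        = unifOn {x ∈ Xset | f (X (⟨t, by omega⟩ : Fin n) ω) ≤ f x}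

/-- Empirical ranking loss of a ranking rule `r` over the sample `x` with values `f ∘ x`. -/
def empLoss {d : ℕ} (f : Euc d → ℝ) {t : ℕ} (x : Fin t → Euc d)
    (r : Euc d → Euc d → ℝ) : ℝ :=
  (2 / ((t : ℝ) * ((t : ℝ) - 1))) * ∑ i : Fin t, ∑ j : Fin t,
    if i < j ∧ r (x i) (x j) ≠ Real.sign (f (x i) - f (x j)) then (1 : ℝ) else 0

/-- Index of the smallest ranking structure of the nested sequence `R` containing a ranking rule
consistent with the sample. -/
def khat {d : ℕ} (f : Euc d → ℝ) (R : ℕ → Set (Euc d → Euc d → ℝ)) {t : ℕ}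
    (x : Fin t → Euc d) : ℕ :=
  sInf {k : ℕ | 1 ≤ k ∧ ∃ r ∈ R k, empLoss f x r = 0}

/-- The exploitation sampling region of AdaRankOpt, given the history `x` and the current best
point `xb`. -/
def adaSet {d : ℕ} (Xset : Set (Euc d)) (f : Euc d → ℝ)
    (R : ℕ → Set (Euc d → Euc d → ℝ)) {t : ℕ} (x : Fin t → Euc d) (xb : Euc d) :
    Set (Euc d) :=
  {y ∈ Xset | ∃ r ∈ R (khat f R x), empLoss f x r = 0 ∧ 0 ≤ r y xb}

/-- Bernoulli measure with parameter `p` on `Bool`. -/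
def bern (p : ℝ) : Measure Bool :=
  ENNReal.ofReal p • Measure.dirac true + ENNReal.ofReal (1 - p) • Measure.dirac false

instance bern.instIsFiniteMeasure (p : ℝ) : IsFiniteMeasure (bern p) := by
  constructor
  rw [bern]
  simp only [Measure.add_apply, Measure.smul_apply, measure_univ, smul_eq_mul, mul_one]
  exact ENNReal.add_lt_top.mpr ⟨ENNReal.ofReal_lt_top, ENNReal.ofReal_lt_top⟩

/-- An AdaRankOpt process with exploration parameter `p` and ranking structures `R`. -/
def IsAdaRankOptProcess {d : ℕ} {Ω : Type*} [MeasurableSpace Ω] (P : Measure Ω)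
    [IsFiniteMeasure P] (Xset : Set (Euc d)) (f : Euc d → ℝ) (p : ℝ)
    (R : ℕ → Set (Euc d → Euc d → ℝ)) (n : ℕ) (X : Fin n → Ω → Euc d) : Prop :=
  ∃ B : Fin n → Ω → Bool,
    (∀ i, Measurable (X i)) ∧ (∀ i, Measurable (B i)) ∧
    (∀ h0 : 0 < n, P.map (X ⟨0, h0⟩) = unifOn Xset) ∧
    ∀ (t : ℕ) (ht : t + 1 < n),
      P.map (B ⟨t + 1, ht⟩) = bern p ∧
      IndepFun (B ⟨t + 1, ht⟩)
        (fun ω => ((fun i : Fin (t + 1) => X (Fin.castLE ht.le i) ω),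
                   (fun i : Fin (t + 1) => B (Fin.castLE ht.le i) ω))) P ∧
      ∃ ihat : Ω → Fin (t + 1), Measurable ihat ∧
        (∀ᵐ ω ∂P, ∀ j : Fin (t + 1),
          f (X (Fin.castLE ht.le j) ω) ≤ f (X (Fin.castLE ht.le (ihat ω)) ω)) ∧
        (∀ᵐ ω ∂P,
          condDistrib (X ⟨t + 1, ht⟩)
            (fun ω' => ((fun i : Fin (t + 1) => X (Fin.castLE ht.le i) ω'),
                        B ⟨t + 1, ht⟩ ω')) P
            ((fun i : Fin (t + 1) => X (Fin.castLE ht.le i) ω), B ⟨t + 1, ht⟩ ω)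
          = if B ⟨t + 1, ht⟩ ω then unifOn Xset
            else unifOn (adaSet Xset f R
                  (fun i : Fin (t + 1) => X (Fin.castLE ht.le i) ω)
                  (X (Fin.castLE ht.le (ihat ω)) ω)))

/-- An AdaRankOpt process indexed by all of `ℕ`. -/
def IsAdaRankOptProcessNat {d : ℕ} {Ω : Type*} [MeasurableSpace Ω] (P : Measure Ω)
    [IsFiniteMeasure P] (Xset : Set (Euc d)) (f : Euc d → ℝ) (p : ℝ)
    (R : ℕ → Set (Euc d → Euc d → ℝ)) (X : ℕ → Ω → Euc d) : Prop :=
  ∃ B : ℕ → Ω → Bool,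
    (∀ i, Measurable (X i)) ∧ (∀ i, Measurable (B i)) ∧
    P.map (X 0) = unifOn Xset ∧
    ∀ t : ℕ,
      P.map (B (t + 1)) = bern p ∧
      IndepFun (B (t + 1))
        (fun ω => ((fun i : Fin (t + 1) => X i ω),
                   (fun i : Fin (t + 1) => B i ω))) P ∧
      ∃ ihat : Ω → Fin (t + 1), Measurable ihat ∧
        (∀ᵐ ω ∂P, ∀ j : Fin (t + 1), f (X j ω) ≤ f (X (ihat ω) ω)) ∧
        (∀ᵐ ω ∂P,
          condDistrib (X (t + 1))
            (fun ω' => ((fun i : Fin (t + 1) => X i ω'), B (t + 1) ω')) P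
            ((fun i : Fin (t + 1) => X i ω), B (t + 1) ω)
          = if B (t + 1) ω then unifOn Xset
            else unifOn (adaSet Xset f R (fun i : Fin (t + 1) => X i ω)
                  (X (ihat ω) ω)))

/-- The true ranking loss `L(r) = P(r(X,X') ≠ r_f(X,X'))` for `X, X'` independent uniform on
`Xset`. -/
def trueLoss {d : ℕ} (Xset : Set (Euc d)) (f : Euc d → ℝ) (r : Euc d → Euc d → ℝ) : ℝ :=
  (((unifOn Xset).prod (unifOn Xset))
    {q : Euc d × Euc d | r q.1 q.2 ≠ Real.sign (f q.1 - f q.2)}).toReal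

/-- The random quantity whose expectation is the Rademacher average of the class `R` given the
ranking rule induced by `f`. -/
def radSupTerm {d : ℕ} (f : Euc d → ℝ) (R : Set (Euc d → Euc d → ℝ)) (n : ℕ)
    (x : Fin n → Euc d) (ε : Fin (n / 2) → Bool) : ℝ :=
  sSup {v : ℝ | ∃ r ∈ R, v =
    (1 / ((n / 2 : ℕ) : ℝ)) * |∑ i : Fin (n / 2),
      (if ε i then (1 : ℝ) else -1) *
      (if r (x ⟨i.1, by have := i.isLt; omega⟩) (x ⟨n / 2 + i.1, by have := i.isLt; omega⟩)
          ≠ Real.sign (f (x ⟨i.1, by have := i.isLt; omega⟩)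
            - f (x ⟨n / 2 + i.1, by have := i.isLt; omega⟩)) then (1 : ℝ) else 0)|}

/-- Expected Rademacher average `E[R_n(R)]` of the class `R` given `r_f`, where the sample is
i.i.d. uniform on `Xset` and the signs are i.i.d. Rademacher. -/
def expRad {d : ℕ} (Xset : Set (Euc d)) (f : Euc d → ℝ)
    (R : Set (Euc d → Euc d → ℝ)) (n : ℕ) : ℝ :=
  ∫ x, (∫ ε, radSupTerm f R n x ε ∂(Measure.pi fun _ : Fin (n / 2) => bern (1 / 2)))
    ∂(Measure.pi fun _ : Fin n => unifOn Xset)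

/-- Index type for the non-constant monomials of degree at most `k` in `d` variables. -/
def MonIdx (d k : ℕ) :=
  {a : Fin d → Fin (k + 1) // 1 ≤ ∑ i, (a i : ℕ) ∧ ∑ i, (a i : ℕ) ≤ k}

instance (d k : ℕ) : Fintype (MonIdx d k) := by unfold MonIdx; infer_instance

/-- The monomial feature `x ↦ ∏ i, x i ^ a i`, a coordinate of the polynomial feature map
`Φ_k`. -/
def monFeature {d k : ℕ} (a : MonIdx d k) (x : Fin d → ℝ) : ℝ :=
  ∏ i, x i ^ ((a.1 i : ℕ))

end

/-!
Let `K` be the part of `X` within distance `r = diam X · min(ln(1/δ)/n, 1)^(1/d)` of `x⋆`. The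
homothety of ratio `r / diam X` centred at `x⋆` maps `X` into `K`, so
`vol K ≥ min(ln(1/δ)/n, 1) · vol X`. Let `z` minimise `f` on `K`. While all samples lie strictly
below `f z`, the admissible sampling region contains `K`, so the next sample again lies below
`f z` with probability at most `1 - vol K / vol X`; all `n` samples do so with probability at most
`δ`. Otherwise the best sample `y` satisfies `f z ≤ f y ≤ f x⋆`; by continuity of the ranking along
`[z, x⋆]` the level set of `y` meets `closedBall x⋆ r`, and regularity of the level sets yields
the bound.
-/

open Metric

lemma Real.pos_iff_pos_of_sign_eq {a b : ℝ} (h : Real.sign a = Real.sign b) : 0 < a ↔ 0 < b := by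
  have key : ∀ {a b : ℝ}, Real.sign a = Real.sign b → 0 < a → 0 < b := by
    intro a b h ha
    rw [Real.sign_of_pos ha] at h
    by_contra hb
    rcases (not_lt.1 hb).lt_or_eq with hb | rfl
    · rw [Real.sign_of_neg hb] at h
      norm_num at h
    · rw [Real.sign_zero] at h
      norm_num at h
  exact ⟨key h, key h.symm⟩

namespace HasContinuousRanking

variable {d : ℕ} {s : Set (Euc d)} {f : Euc d → ℝ}

lemma exists_lt_iff (hf : HasContinuousRanking s f) :
    ∃ h : Euc d → ℝ, ContinuousOn h s ∧ ∀ x ∈ s, ∀ y ∈ s, (f x < f y ↔ h x < h y) := by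
  obtain ⟨h, hh, hsign⟩ := hf
  refine ⟨h, hh, fun x hx y hy => ?_⟩
  simpa only [sub_pos] using Real.pos_iff_pos_of_sign_eq (hsign y hy x hx)

lemma exists_isMinOn (hf : HasContinuousRanking s f) {K : Set (Euc d)} (hK : IsCompact K)
    (hKs : K ⊆ s) (hne : K.Nonempty) : ∃ z ∈ K, IsMinOn f K z := by
  obtain ⟨h, hh, hlt⟩ := hf.exists_lt_iff
  obtain ⟨z, hz, hmin⟩ := hK.exists_isMinOn hne (hh.mono hKs)
  exact ⟨z, hz, fun x hx =>
    not_lt.1 fun hxz => not_lt.2 (hmin hx) ((hlt x (hKs hx) z (hKs hz)).1 hxz)⟩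

lemma exists_mem_segment_eq (hf : HasContinuousRanking s f) (hs : Convex ℝ s) {x y z : Euc d}
    (hx : x ∈ s) (hy : y ∈ s) (hz : z ∈ s) (hzy : f z ≤ f y) (hyx : f y ≤ f x) :
    ∃ w ∈ segment ℝ z x, f w = f y := by
  obtain ⟨h, hh, hlt⟩ := hf.exists_lt_iff
  have hseg : segment ℝ z x ⊆ s := hs.segment_subset hz hx
  have hle : ∀ a ∈ s, ∀ b ∈ s, f a ≤ f b → h a ≤ h b := fun a ha b hb hab =>
    not_lt.1 fun hba => not_lt.2 hab ((hlt b hb a ha).2 hba)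
  obtain ⟨w, hw, hwy⟩ := (convex_segment z x).isPreconnected.intermediate_value
    (left_mem_segment ℝ z x) (right_mem_segment ℝ z x) (hh.mono hseg)
    ⟨hle z hz y hy hzy, hle y hy x hx hyx⟩
  refine ⟨w, hw, le_antisymm (not_lt.1 fun hyw => ?_) (not_lt.1 fun hwy' => ?_)⟩
  · exact ((hlt y hy w (hseg hw)).1 hyw).ne hwy.symm
  · exact ((hlt w (hseg hw) y hy).1 hwy').ne hwy

lemma measurableSet_sep_lt (hf : HasContinuousRanking s f) (hs : MeasurableSet s) {z : Euc d}
    (hz : z ∈ s) : MeasurableSet {x ∈ s | f x < f z} := by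
  obtain ⟨h, hh, hlt⟩ := hf.exists_lt_iff
  obtain ⟨u, hu, hus⟩ := continuousOn_iff'.1 hh (Iio (h z)) isOpen_Iio
  have hsep : {x ∈ s | f x < f z} = u ∩ s := by
    rw [← hus]
    ext x
    exact ⟨fun ⟨hx, hfx⟩ => ⟨(hlt x hx z hz).1 hfx, hx⟩,
      fun ⟨hhx, hx⟩ => ⟨hx, (hlt x hx z hz).2 hhx⟩⟩
  rw [hsep]
  exact hu.measurableSet.inter hs

end HasContinuousRanking

namespace RegularLevelSets

variable {d : ℕ} {s : Set (Euc d)} {f : Euc d → ℝ} {xs : Euc d} {c α : ℝ}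

/-- The factor `c ^ ((2 + α) / (1 + α))` and the squared exponent come from applying regularity
twice: to the pair `(y, w)` and to the pair `(y, y)`. -/
lemma dist_le_of_eq (hreg : RegularLevelSets s f xs c α) (hc : 0 < c) (hα : 0 ≤ α) {y w : Euc d}
    (hy : y ∈ s) (hw : w ∈ s) (hyw : f y = f w) :
    dist xs y ≤ c ^ ((2 + α) / (1 + α)) * dist xs w ^ ((1 : ℝ) / (1 + α) ^ 2) := by
  obtain ⟨-, -, -, hlev⟩ := hreg
  have h1α : 0 < 1 + α := by linarith
  set e : ℝ := 1 / (1 + α)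
  calc dist xs y ≤ c * dist xs y ^ e := hlev y hy y hy rfl
    _ ≤ c * (c * dist xs w ^ e) ^ e := by gcongr; exact hlev y hy w hw hyw
    _ = c ^ (1 + e) * dist xs w ^ (e * e) := by
      rw [Real.mul_rpow hc.le (by positivity), ← Real.rpow_mul dist_nonneg, Real.rpow_add hc,
        Real.rpow_one]
      ring
    _ = c ^ ((2 + α) / (1 + α)) * dist xs w ^ ((1 : ℝ) / (1 + α) ^ 2) := by
      congr 2
      · simp only [e]
        field_simp
        ring
      · simp only [e]
        field_simp

lemma dist_le_of_le (hreg : RegularLevelSets s f xs c α) (hf : HasContinuousRanking s f)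
    (hs : Convex ℝ s) (hc : 0 < c) (hα : 0 ≤ α) {y z : Euc d} (hy : y ∈ s) (hz : z ∈ s)
    (hzy : f z ≤ f y) :
    dist xs y ≤ c ^ ((2 + α) / (1 + α)) * dist xs z ^ ((1 : ℝ) / (1 + α) ^ 2) := by
  obtain ⟨w, hw, hwy⟩ := hf.exists_mem_segment_eq hs hreg.1 hy hz hzy (hreg.2.1 y hy)
  have hwz : dist xs w ≤ dist xs z := mem_closedBall'.1 <|
    (convex_closedBall xs (dist xs z)).segment_subset (mem_closedBall'.2 le_rfl)
      (mem_closedBall_self dist_nonneg) hw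
  calc dist xs y ≤ c ^ ((2 + α) / (1 + α)) * dist xs w ^ ((1 : ℝ) / (1 + α) ^ 2) :=
        hreg.dist_le_of_eq hc hα hy (hs.segment_subset hz hreg.1 hw) hwy.symm
    _ ≤ c ^ ((2 + α) / (1 + α)) * dist xs z ^ ((1 : ℝ) / (1 + α) ^ 2) := by gcongr

end RegularLevelSets

lemma Convex.ofReal_pow_finrank_mul_le_inter_closedBall {E : Type*} [NormedAddCommGroup E]
    [NormedSpace ℝ E] [MeasurableSpace E] [BorelSpace E] [FiniteDimensional ℝ E] (μ : Measure E)
    [μ.IsAddHaarMeasure] {s : Set E} (hs : Convex ℝ s) (hsb : Bornology.IsBounded s) {x : E}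
    (hx : x ∈ s) {t : ℝ} (ht0 : 0 ≤ t) (ht1 : t ≤ 1) :
    ENNReal.ofReal (t ^ Module.finrank ℝ E) * μ s ≤ μ (s ∩ closedBall x (t * diam s)) := by
  have himage : AffineMap.homothety x t '' s ⊆ s ∩ closedBall x (t * diam s) := by
    rintro _ ⟨y, hy, rfl⟩
    refine ⟨?_, ?_⟩
    · rw [AffineMap.homothety_eq_lineMap]
      exact hs.lineMap_mem hx hy ⟨ht0, ht1⟩
    · rw [mem_closedBall, dist_homothety_center, Real.norm_of_nonneg ht0]
      exact mul_le_mul_of_nonneg_left (dist_le_diam_of_mem hsb hx hy) ht0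
  calc ENNReal.ofReal (t ^ Module.finrank ℝ E) * μ s = μ (AffineMap.homothety x t '' s) := by
        rw [Measure.addHaar_image_homothety, abs_of_nonneg (by positivity)]
    _ ≤ μ (s ∩ closedBall x (t * diam s)) := measure_mono himage

lemma Convex.ofReal_mul_volume_le_inter_closedBall {d : ℕ} {s : Set (Euc d)} (hs : Convex ℝ s)
    (hsb : Bornology.IsBounded s) {x : Euc d} (hx : x ∈ s) {m : ℝ} (hm0 : 0 ≤ m) (hm1 : m ≤ 1) :
    ENNReal.ofReal m * volume s ≤ volume (s ∩ closedBall x (m ^ (d⁻¹ : ℝ) * diam s)) := by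
  have hpow : m ≤ (m ^ (d⁻¹ : ℝ)) ^ d := by
    rcases eq_or_ne d 0 with rfl | hd
    · simpa using hm1
    · rw [Real.rpow_inv_natCast_pow hm0 hd]
  refine le_trans ?_ (hs.ofReal_pow_finrank_mul_le_inter_closedBall volume hsb hx
    (Real.rpow_nonneg hm0 _) (Real.rpow_le_one hm0 hm1 (by positivity)))
  rw [finrank_euclideanSpace_fin]
  gcongr

lemma one_sub_ofReal_min_pow_le {δ : ℝ} (hδ0 : 0 < δ) (hδ1 : δ ≤ 1) {n : ℕ} (hn : 0 < n) :
    (1 - ENNReal.ofReal (min (Real.log (1 / δ) / n) 1)) ^ n ≤ ENNReal.ofReal δ := by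
  set q := Real.log (1 / δ) / n
  have hq : 0 ≤ q := div_nonneg (Real.log_nonneg (one_le_one_div hδ0 hδ1)) n.cast_nonneg
  rw [← ENNReal.ofReal_one, ← ENNReal.ofReal_sub _ (le_min hq zero_le_one),
    ← ENNReal.ofReal_pow (sub_nonneg.2 (min_le_right _ _))]
  refine ENNReal.ofReal_le_ofReal ?_
  rcases le_total q 1 with hq1 | hq1
  · rw [min_eq_left hq1]
    calc (1 - q) ^ n ≤ Real.exp (-q) ^ n :=
          pow_le_pow_left₀ (sub_nonneg.2 hq1) (Real.one_sub_le_exp_neg q) n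
      _ = δ := by
        rw [← Real.exp_nat_mul, mul_neg, mul_div_cancel₀ _ (by positivity), one_div, Real.log_inv,
          neg_neg, Real.exp_log hδ0]
  · rw [min_eq_right hq1, sub_self, zero_pow hn.ne']
    exact hδ0.le

lemma unifOn_compl_eq_zero {α : Type*} [MeasureSpace α] {A s : Set α} (hs : MeasurableSet s)
    (hAs : A ⊆ s) : unifOn A sᶜ = 0 := by
  rw [unifOn, Measure.smul_apply, Measure.restrict_apply hs.compl,
    (disjoint_compl_left_iff_subset.2 hAs).inter_eq, measure_empty, smul_zero]

lemma unifOn_le_one_sub {α : Type*} [MeasureSpace α] {s A K T : Set α}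
    (hK : MeasurableSet K) (hKA : K ⊆ A) (hAs : A ⊆ s) (hTK : Disjoint T K) (hA0 : volume A ≠ 0)
    (hs : volume s ≠ ⊤) {p : ℝ≥0∞} (hp : p * volume s ≤ volume K) : unifOn A T ≤ 1 - p := by
  have hAfin : volume A ≠ ⊤ := ne_top_of_le_ne_top hs (measure_mono hAs)
  have : IsProbabilityMeasure (unifOn A) := cond_isProbabilityMeasure_of_finite hA0 hAfin
  have hpK : p ≤ unifOn A K := calc
    p ≤ volume K / volume s :=
      (ENNReal.le_div_iff_mul_le (Or.inl (ne_bot_of_le_ne_bot hA0 (measure_mono hAs)))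
        (Or.inl hs)).2 hp
    _ ≤ volume K / volume A := ENNReal.div_le_div_left (measure_mono hAs) _
    _ = unifOn A K := by
      rw [unifOn, Measure.smul_apply, Measure.restrict_apply hK, inter_eq_left.2 hKA, smul_eq_mul,
        ENNReal.div_eq_inv_mul]
  calc unifOn A T ≤ unifOn A Kᶜ := measure_mono hTK.subset_compl_right
    _ = 1 - unifOn A K := prob_compl_eq_one_sub hK
    _ ≤ 1 - p := tsub_le_tsub_left hpK 1

lemma measure_inter_preimage_le_of_condDistrib_le {Ω β γ : Type*} [MeasurableSpace Ω]
    [MeasurableSpace β] [StandardBorelSpace β] [Nonempty β] [MeasurableSpace γ] {P : Measure Ω}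
    [IsFiniteMeasure P] {Y : Ω → β} {W : Ω → γ} (hY : Measurable Y) (hW : Measurable W)
    {B : Set γ} {T : Set β} (hB : MeasurableSet B) (hT : MeasurableSet T) {p : ℝ≥0∞}
    (hp : ∀ᵐ ω ∂P, W ω ∈ B → condDistrib Y W P (W ω) T ≤ p) :
    P (W ⁻¹' B ∩ Y ⁻¹' T) ≤ p * P (W ⁻¹' B) := by
  rw [← setLIntegral_preimage_condDistrib hW hY.aemeasurable hT hB, ← setLIntegral_const]
  exact lintegral_mono_ae ((ae_restrict_iff' (hW hB)).2 hp)

lemma one_sub_le_measure_of_ae_imp {Ω : Type*} [MeasurableSpace Ω] {P : Measure Ω}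
    [IsProbabilityMeasure P] {F S : Set Ω} {ε : ℝ≥0∞} (hF : P F ≤ ε)
    (hFS : ∀ᵐ ω ∂P, ω ∉ F → ω ∈ S) : 1 - ε ≤ P S := by
  rw [tsub_le_iff_right]
  calc 1 = P univ := measure_univ.symm
    _ ≤ P (S ∪ F) := measure_mono_ae (hFS.mono fun ω hω _ => (em (ω ∈ F)).elim Or.inr (Or.inl ∘ hω))
    _ ≤ P S + P F := measure_union_le S F
    _ ≤ P S + ε := by gcongr

namespace IsRankOptProcess

variable {d : ℕ} {Ω : Type*} [MeasurableSpace Ω] {P : Measure Ω} {s : Set (Euc d)}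
  {f : Euc d → ℝ} {n : ℕ} {X : Fin n → Ω → Euc d}

lemma measure_history_inter_le [IsFiniteMeasure P] (hX : IsRankOptProcess P s f n X) {t : ℕ}
    (ht : t + 1 < n) {B : Set (Fin (t + 1) → Euc d)} (hB : MeasurableSet B) {T : Set (Euc d)}
    (hT : MeasurableSet T) {p : ℝ≥0∞}
    (hp : ∀ x ∈ B, ∀ A : Set (Euc d), 0 < volume A →
      {y ∈ s | ∀ i, f (x i) ≤ f y} ⊆ A → A ⊆ s → unifOn A T ≤ p) :
    P ((fun ω i => X (Fin.castLE ht.le i) ω) ⁻¹' B ∩ X ⟨t + 1, ht⟩ ⁻¹' T) ≤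
      p * P ((fun ω i => X (Fin.castLE ht.le i) ω) ⁻¹' B) := by
  refine measure_inter_preimage_le_of_condDistrib_le (hX.1 _)
    (measurable_pi_lambda _ fun i => hX.1 _) hB hT ?_
  filter_upwards [hX.2.2 t ht] with ω ⟨A, _, hA0, hupA, hAs, hlaw⟩ hω
  rw [hlaw]
  exact hp _ hω A hA0 hupA hAs

lemma ae_mem [IsFiniteMeasure P] (hX : IsRankOptProcess P s f n X) (hs : MeasurableSet s)
    (i : Fin n) : ∀ᵐ ω ∂P, X i ω ∈ s := by
  rw [ae_iff]
  obtain ⟨_ | t, hi⟩ := i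
  · change P (X ⟨0, hi⟩ ⁻¹' sᶜ) = 0
    rw [← Measure.map_apply (hX.1 _) hs.compl, hX.2.1 hi, unifOn_compl_eq_zero hs subset_rfl]
  · have h := hX.measure_history_inter_le hi MeasurableSet.univ hs.compl (p := 0)
      fun _ _ A _ _ hAs => (unifOn_compl_eq_zero hs hAs).le
    rw [preimage_univ, univ_inter, zero_mul] at h
    exact nonpos_iff_eq_zero.1 h

lemma ae_forall_mem [IsFiniteMeasure P] (hX : IsRankOptProcess P s f n X) (hs : MeasurableSet s) :
    ∀ᵐ ω ∂P, ∀ i, X i ω ∈ s :=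
  ae_all_iff.2 (hX.ae_mem hs)

lemma measure_forall_mem_le_pow [IsProbabilityMeasure P] (hX : IsRankOptProcess P s f n X)
    (hs0 : volume s ≠ 0) (hsfin : volume s ≠ ⊤) {E K : Set (Euc d)}
    (hE : MeasurableSet E) (hK : MeasurableSet K) (hKs : K ⊆ s)
    (hEK : ∀ y ∈ E, ∀ x ∈ K, f y < f x) {p : ℝ≥0∞} (hp : p * volume s ≤ volume K) :
    P {ω | ∀ i, X i ω ∈ E} ≤ (1 - p) ^ n := by
  have hunif : ∀ A, volume A ≠ 0 → K ⊆ A → A ⊆ s → unifOn A E ≤ 1 - p :=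
    fun A hA0 hKA hAs => unifOn_le_one_sub hK hKA hAs
      (disjoint_left.2 fun y hyE hyK => lt_irrefl _ (hEK y hyE y hyK)) hA0 hsfin hp
  have hprefix :
      ∀ t (ht : t ≤ n), P {ω | ∀ i : Fin t, X (Fin.castLE ht i) ω ∈ E} ≤ (1 - p) ^ t := by
    intro t
    induction t with
    | zero => intro _; simp
    | succ t ih =>
      intro ht
      rcases t with _ | t
      · calc P {ω | ∀ i : Fin 1, X (Fin.castLE ht i) ω ∈ E} = P (X ⟨0, ht⟩ ⁻¹' E) := by
              simp only [Fin.forall_fin_one]; rfl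
          _ = unifOn s E := by rw [← Measure.map_apply (hX.1 _) hE, hX.2.1]
          _ ≤ (1 - p) ^ (0 + 1) := by
              rw [zero_add, pow_one]
              exact hunif s hs0 hKs subset_rfl
      · have ht' : t + 1 < n := ht
        calc P {ω | ∀ i : Fin (t + 2), X (Fin.castLE ht i) ω ∈ E}
            = P ((fun ω i => X (Fin.castLE ht'.le i) ω) ⁻¹' univ.pi (fun _ => E) ∩
                X ⟨t + 1, ht'⟩ ⁻¹' E) := by
              congr 1
              ext ω
              simp only [Fin.forall_fin_succ' (n := t + 1), mem_ofPred_eq, mem_inter_iff,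
                mem_preimage, mem_univ_pi, Fin.castLE_castSucc]
              rfl
          _ ≤ (1 - p) * P ((fun ω i => X (Fin.castLE ht'.le i) ω) ⁻¹' univ.pi (fun _ => E)) :=
              hX.measure_history_inter_le ht' (.univ_pi fun _ => hE) hE
                fun x hx A hA0 hupA hAs => hunif A hA0.ne'
                  (fun y hy => hupA ⟨hKs hy, fun i => (hEK _ (hx i trivial) y hy).le⟩) hAs
          _ ≤ (1 - p) * (1 - p) ^ (t + 1) := by
              gcongr
              simpa only [preimage, mem_univ_pi] using ih ht'.le
          _ = (1 - p) ^ (t + 1 + 1) := by ring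
  simpa only [Fin.castLE_refl] using hprefix n le_rfl

end IsRankOptProcess

/-- **Upper bound for RankOpt** (Theorem 3 of the paper): with probability at least `1 - δ`,
any empirical argmax point `X î` of a RankOpt-type process satisfies
`‖x⋆ - X î‖₂ ≤ C₁ (ln(1/δ)/n)^(1/(d(1+α)²))`. -/
theorem rankopt_upper_bound
    {d : ℕ} {Xset : Set (Euc d)} (hXcomp : IsCompact Xset) (hXconv : Convex ℝ Xset)
    (hXint : (interior Xset).Nonempty)
    {f : Euc d → ℝ} (hf : HasContinuousRanking Xset f)
    {xs : Euc d} {c α : ℝ} (hc : 0 < c) (hα : 0 ≤ α)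
    (hreg : RegularLevelSets Xset f xs c α)
    {Ω : Type*} [MeasurableSpace Ω] {P : Measure Ω} [IsProbabilityMeasure P]
    {n : ℕ} (hn : 0 < n) {X : Fin n → Ω → Euc d}
    (hproc : IsRankOptProcess P Xset f n X)
    {δ : ℝ} (hδ : δ ∈ Set.Ioo (0 : ℝ) 1) :
    ENNReal.ofReal (1 - δ) ≤
      P {ω | ∀ i : Fin n, (∀ j : Fin n, f (X j ω) ≤ f (X i ω)) →
        dist xs (X i ω) ≤
          c ^ ((2 + α) / (1 + α)) * Metric.diam Xset ^ ((1 : ℝ) / (1 + α) ^ 2) *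
            (Real.log (1 / δ) / n) ^ ((1 : ℝ) / (d * (1 + α) ^ 2))} := by
  obtain ⟨hδ0, hδ1⟩ := hδ
  have hXm : MeasurableSet Xset := hXcomp.isClosed.measurableSet
  set q := Real.log (1 / δ) / n
  have hq : 0 ≤ q := div_nonneg (Real.log_nonneg (one_le_one_div hδ0 hδ1.le)) n.cast_nonneg
  have hm : 0 ≤ min q 1 := le_min hq zero_le_one
  set r := min q 1 ^ (d⁻¹ : ℝ) * diam Xset
  have hr : 0 ≤ r := mul_nonneg (Real.rpow_nonneg hm _) diam_nonneg
  obtain ⟨z, hzK, hzmin⟩ := hf.exists_isMinOn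
    (hXcomp.inter_right (isClosed_closedBall (x := xs) (ε := r))) inter_subset_left
    ⟨xs, hreg.1, mem_closedBall_self hr⟩
  have hbad : P {ω | ∀ i, X i ω ∈ {x ∈ Xset | f x < f z}} ≤ ENNReal.ofReal δ :=
    (hproc.measure_forall_mem_le_pow (Measure.measure_pos_of_nonempty_interior _ hXint).ne'
      hXcomp.measure_lt_top.ne (hf.measurableSet_sep_lt hXm hzK.1)
      (hXm.inter measurableSet_closedBall) inter_subset_left
      (fun y hy x hx => hy.2.trans_le (hzmin hx))
      (hXconv.ofReal_mul_volume_le_inter_closedBall hXcomp.isBounded hreg.1 hm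
        (min_le_right _ _))).trans
    (one_sub_ofReal_min_pow_le hδ0 hδ1.le hn)
  rw [ENNReal.ofReal_sub 1 hδ0.le, ENNReal.ofReal_one]
  refine one_sub_le_measure_of_ae_imp hbad ?_
  filter_upwards [hproc.ae_forall_mem hXm] with ω hω hgood i hi
  obtain ⟨j, hj⟩ := not_forall.1 hgood
  have hzj : f z ≤ f (X j ω) := not_lt.1 fun h => hj ⟨hω j, h⟩
  have hdist : dist xs z ≤ q ^ (d⁻¹ : ℝ) * diam Xset :=
    (mem_closedBall'.1 hzK.2).trans (mul_le_mul_of_nonneg_right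
      (Real.rpow_le_rpow hm (min_le_left _ _) (by positivity)) diam_nonneg)
  calc dist xs (X i ω) ≤ c ^ ((2 + α) / (1 + α)) * dist xs z ^ ((1 : ℝ) / (1 + α) ^ 2) :=
        hreg.dist_le_of_le hf hXconv hc hα (hω i) hzK.1 (hzj.trans (hi j))
    _ ≤ c ^ ((2 + α) / (1 + α)) * (q ^ (d⁻¹ : ℝ) * diam Xset) ^ ((1 : ℝ) / (1 + α) ^ 2) := by
        gcongr
    _ = _ := by
        rw [Real.mul_rpow (Real.rpow_nonneg hq _) diam_nonneg, ← Real.rpow_mul hq, one_div,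
          one_div, mul_inv]
        ring
end

section
/- Let X ⊂ ℝ^d be a compact convex set with nonempty interior, let f : X → ℝ have a continuous induced ranking rule, let (X_1, …, X_n) be a RankOpt-type process for f on X, and let (X*_1, …, X*_n) be a Pure Adaptive Search for f on X. Then for every y ∈ ℝ, P(max_{1≤i≤n} f(X_i) ≥ y) ≤ P(f(X*_n) ≥ y). -/
open MeasureTheory ProbabilityTheory Set
open scoped ENNReal NNReal BigOperators

/-!
Replace `f` by a measurable `h` inducing the same order on `Xset`, and compare the best level
`M t = max_{i ≤ t} h (X i)` of the RankOpt process with the level `h (X⋆ t)` of pure adaptive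
search: by induction on `t`, `E ψ (M t) ≤ E ψ (h (X⋆ t))` for every monotone `ψ`. Given the
history, `X (t + 1)` is uniform on a set `A` containing the upper level set `L` of `M t`. Points of
`A \ L` do not raise the level, and `ψ (M t)` is at most the average of `ψ ∘ h` over `L`, so the
conditional expectation of `ψ (M (t + 1))` is at most that average. As a function of the level,
this average is the one-step transition of pure adaptive search applied to `ψ`, and it is again
monotone. The indicator of the levels at which `f ≥ y` is reached gives the claim.
-/

section Average

variable {α : Type*} [MeasurableSpace α] {μ : Measure α} {s t : Set α} {g : α → ℝ≥0∞}

theorem le_setLAverage_of_forall_le {c : ℝ≥0∞} (hs : MeasurableSet s) (hs₀ : μ s ≠ 0)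
    (hs_top : μ s ≠ ∞) (hc : ∀ x ∈ s, c ≤ g x) : c ≤ ⨍⁻ x in s, g x ∂μ :=
  calc c = ⨍⁻ _ in s, c ∂μ := (setLAverage_const hs₀ hs_top c).symm
    _ ≤ ⨍⁻ x in s, g x ∂μ := laverage_mono_ae (ae_restrict_of_forall_mem hs hc)

theorem setLAverage_le_of_subset (hts : t ⊆ s) (ht : MeasurableSet t)
    (ht_top : μ t ≠ ∞) (hg : ∀ x ∈ s \ t, g x ≤ ⨍⁻ y in t, g y ∂μ) :
    ⨍⁻ x in s, g x ∂μ ≤ ⨍⁻ x in t, g x ∂μ := by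
  set a := ⨍⁻ y in t, g y ∂μ
  have hdiff : ∫⁻ x in s \ t, g x ∂μ ≤ a * μ (s \ t) :=
    (setLIntegral_mono measurable_const hg).trans_eq (setLIntegral_const _ _)
  rw [setLAverage_eq]
  refine ENNReal.div_le_of_le_mul ?_
  calc ∫⁻ x in s, g x ∂μ = ∫⁻ x in t, g x ∂μ + ∫⁻ x in s \ t, g x ∂μ := by
        rw [← lintegral_inter_add_sdiff _ _ ht, inter_eq_right.2 hts]
    _ ≤ μ t * a + a * μ (s \ t) := add_le_add (measure_mul_setLAverage g ht_top).ge hdiff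
    _ = a * μ s := by
        rw [mul_comm, ← mul_add, measure_add_sdiff ht.nullMeasurableSet, union_eq_right.2 hts]

end Average

section LevelAverage

variable {E : Type*} [MeasureSpace E] {s A : Set E} {h : E → ℝ} {ψ : ℝ → ℝ≥0∞}

theorem lintegral_unifOn (s : Set E) (g : E → ℝ≥0∞) :
    ∫⁻ x, g x ∂unifOn s = ⨍⁻ x in s, g x ∂volume := (setLAverage_eq' volume g s).symm

theorem ae_unifOn_mem_of_subset {t : Set E} (ht : MeasurableSet t) (hA : A ⊆ t) :
    ∀ᵐ x ∂unifOn A, x ∈ t :=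
  Measure.ae_smul_measure (ae_restrict_of_ae_restrict_of_subset hA (ae_restrict_mem ht)) _

theorem volume_ne_zero_of_isProbabilityMeasure_unifOn [IsProbabilityMeasure (unifOn s)] :
    volume s ≠ 0 := fun hs =>
  IsProbabilityMeasure.ne_zero (unifOn s) (cond_eq_zero_of_meas_eq_zero hs)

/-- The expected `ψ`-value of the level reached by one step of pure adaptive search from
level `c`. Its value `∞` on null level sets, which pure adaptive search almost surely never
reaches, makes it monotone in `c`. -/
noncomputable def levelAverage (s : Set E) (h : E → ℝ) (ψ : ℝ → ℝ≥0∞) (c : ℝ) : ℝ≥0∞ :=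
  if volume {x ∈ s | c ≤ h x} = 0 then ∞ else ⨍⁻ x in {x ∈ s | c ≤ h x}, ψ (h x) ∂volume

theorem levelAverage_of_measure_eq_zero {c : ℝ} (h₀ : volume {x ∈ s | c ≤ h x} = 0) :
    levelAverage s h ψ c = ∞ := if_pos h₀

theorem levelAverage_of_measure_ne_zero {c : ℝ} (h₀ : volume {x ∈ s | c ≤ h x} ≠ 0) :
    levelAverage s h ψ c = ⨍⁻ x in {x ∈ s | c ≤ h x}, ψ (h x) ∂volume := if_neg h₀

theorem le_levelAverage (hs : MeasurableSet s) (hs_top : volume s ≠ ∞) (hh : Measurable h)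
    (hψ : Monotone ψ) (c : ℝ) : ψ c ≤ levelAverage s h ψ c := by
  by_cases h₀ : volume {x ∈ s | c ≤ h x} = 0
  · rw [levelAverage_of_measure_eq_zero h₀]
    exact le_top
  · rw [levelAverage_of_measure_ne_zero h₀]
    exact le_setLAverage_of_forall_le (hs.inter (measurableSet_le measurable_const hh)) h₀
      (measure_ne_top_of_subset inter_subset_left hs_top) fun x hx => hψ hx.2

theorem monotone_levelAverage (hs : MeasurableSet s) (hs_top : volume s ≠ ∞) (hh : Measurable h)
    (hψ : Monotone ψ) : Monotone (levelAverage s h ψ) := by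
  intro c c' hcc'
  have hsub : {x ∈ s | c' ≤ h x} ⊆ {x ∈ s | c ≤ h x} := fun x hx => ⟨hx.1, hcc'.trans hx.2⟩
  by_cases h₀ : volume {x ∈ s | c' ≤ h x} = 0
  · rw [levelAverage_of_measure_eq_zero h₀]
    exact le_top
  have hc' := le_levelAverage hs hs_top hh hψ c'
  rw [levelAverage_of_measure_ne_zero h₀] at hc' ⊢
  rw [levelAverage_of_measure_ne_zero fun h₀' => h₀ (measure_mono_null hsub h₀')]
  refine setLAverage_le_of_subset hsub (hs.inter (measurableSet_le measurable_const hh))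
    (measure_ne_top_of_subset inter_subset_left hs_top) fun x hx => ?_
  exact (hψ (not_le.1 fun hx' => hx.2 ⟨hx.1.1, hx'⟩).le).trans hc'

theorem lintegral_unifOn_max_le_levelAverage (hs : MeasurableSet s) (hs_top : volume s ≠ ∞)
    (hh : Measurable h) (hψ : Monotone ψ) {m : ℝ} (hmA : {x ∈ s | m ≤ h x} ⊆ A) (hAs : A ⊆ s) :
    ∫⁻ y, ψ (max m (h y)) ∂unifOn A ≤ levelAverage s h ψ m := by
  by_cases h₀ : volume {x ∈ s | m ≤ h x} = 0
  · rw [levelAverage_of_measure_eq_zero h₀]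
    exact le_top
  have hm := le_levelAverage hs hs_top hh hψ m
  rw [levelAverage_of_measure_ne_zero h₀] at hm ⊢
  have hmeas : MeasurableSet {x ∈ s | m ≤ h x} := hs.inter (measurableSet_le measurable_const hh)
  have hmax : ⨍⁻ y in {x ∈ s | m ≤ h x}, ψ (max m (h y)) ∂volume
      = ⨍⁻ y in {x ∈ s | m ≤ h x}, ψ (h y) ∂volume :=
    setLAverage_congr_fun hmeas fun y hy => by rw [max_eq_right hy.2]
  rw [lintegral_unifOn, ← hmax]
  refine setLAverage_le_of_subset hmA hmeas
    (measure_ne_top_of_subset inter_subset_left hs_top) fun y hy => ?_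
  rw [hmax, max_eq_left (not_le.1 fun hy' => hy.2 ⟨hAs hy.1, hy'⟩).le]
  exact hm

end LevelAverage

theorem IsUpperSet.monotone_indicator {α β : Type*} [Preorder α] [Preorder β] [Zero β]
    {s : Set α} (hs : IsUpperSet s) {c : β} (hc : 0 ≤ c) : Monotone (s.indicator fun _ => c) := by
  intro a b hab
  by_cases ha : a ∈ s
  · rw [indicator_of_mem ha, indicator_of_mem (hs hab ha)]
  · rw [indicator_of_notMem ha]
    exact indicator_nonneg (fun _ _ => hc) b

theorem Fin.ciSup_eq_max_castSucc_last {α : Type*} [ConditionallyCompleteLinearOrder α] {k : ℕ}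
    (a : Fin (k + 2) → α) : ⨆ i, a i = max (⨆ i : Fin (k + 1), a i.castSucc) (a (Fin.last _)) := by
  refine le_antisymm (ciSup_le fun i => ?_)
    (max_le (ciSup_le fun i => Finite.le_ciSup a _) (Finite.le_ciSup a _))
  cases i using Fin.lastCases with
  | last => exact le_max_right _ _
  | cast i => exact le_max_of_le_left (Finite.le_ciSup (fun i => a i.castSucc) i)

theorem Real.sign_eq_one_iff {r : ℝ} : Real.sign r = 1 ↔ 0 < r := by
  refine ⟨fun h => ?_, Real.sign_of_pos⟩
  rcases lt_trichotomy r 0 with hr | rfl | hr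
  · rw [Real.sign_of_neg hr] at h
    norm_num at h
  · rw [Real.sign_zero] at h
    norm_num at h
  · exact hr

theorem HasContinuousRanking.exists_measurable_le_iff {d : ℕ} {Xset : Set (Euc d)}
    {f : Euc d → ℝ} (hf : HasContinuousRanking Xset f) (hXset : MeasurableSet Xset) :
    ∃ h : Euc d → ℝ, Measurable h ∧ ∀ x ∈ Xset, ∀ y ∈ Xset, f x ≤ f y ↔ h x ≤ h y := by
  classical
  obtain ⟨h, hcont, hsign⟩ := hf
  refine ⟨Xset.piecewise h 0, hcont.measurable_piecewise continuousOn_const hXset,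
    fun x hx y hy => ?_⟩
  rw [piecewise_eq_of_mem _ _ _ hx, piecewise_eq_of_mem _ _ _ hy, ← not_lt, ← not_lt,
    ← sub_pos (a := f x), ← sub_pos (a := h x), ← Real.sign_eq_one_iff, ← Real.sign_eq_one_iff,
    hsign x hx y hy]

section CondDistrib

variable {Ω β E : Type*} [MeasurableSpace Ω] [MeasurableSpace β] [MeasurableSpace E]
  [StandardBorelSpace E] [Nonempty E] {P : Measure Ω} [IsFiniteMeasure P] {Y : Ω → E}
  {W : Ω → β}

theorem lintegral_comp_condDistrib (hY : Measurable Y) (hW : Measurable W)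
    {g : β × E → ℝ≥0∞} (hg : Measurable g) :
    ∫⁻ ω, g (W ω, Y ω) ∂P = ∫⁻ ω, ∫⁻ y, g (W ω, y) ∂condDistrib Y W P (W ω) ∂P := by
  rw [← lintegral_map hg (hW.prodMk hY), ← compProd_map_condDistrib hY.aemeasurable,
    Measure.lintegral_compProd hg, lintegral_map hg.lintegral_kernel_prod_right' hW]

theorem ae_of_ae_condDistrib (hY : Measurable Y) (hW : Measurable W) {s : Set E}
    (hs : MeasurableSet s) (h : ∀ᵐ ω ∂P, ∀ᵐ y ∂condDistrib Y W P (W ω), y ∈ s) :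
    ∀ᵐ ω ∂P, Y ω ∈ s := by
  have hcompl := setLIntegral_preimage_condDistrib (μ := P) hW hY.aemeasurable hs.compl
    MeasurableSet.univ
  rw [preimage_univ, Measure.restrict_univ, univ_inter] at hcompl
  change P (Y ⁻¹' sᶜ) = 0
  rw [← hcompl]
  exact (lintegral_congr_ae (h.mono fun ω hω => ae_iff.1 hω)).trans lintegral_zero

end CondDistrib

section Processes

variable {d n : ℕ} {Xset : Set (Euc d)} {f h : Euc d → ℝ} {Ω : Type*} [MeasurableSpace Ω]
  {P : Measure Ω} [IsFiniteMeasure P] {X : Fin n → Ω → Euc d} {Ω' : Type*} [MeasurableSpace Ω']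
  {P' : Measure Ω'} [IsFiniteMeasure P'] {X' : Fin n → Ω' → Euc d}

theorem IsRankOptProcess.ae_mem_s4 (hX : IsRankOptProcess P Xset f n X)
    (hXset : MeasurableSet Xset) (i : Fin n) : ∀ᵐ ω ∂P, X i ω ∈ Xset := by
  obtain ⟨hmeas, hinit, hstep⟩ := hX
  obtain ⟨_ | t, hi⟩ := i
  · exact ae_of_ae_map (hmeas _).aemeasurable
      (hinit hi ▸ ae_unifOn_mem_of_subset hXset subset_rfl)
  · refine ae_of_ae_condDistrib (hmeas _)
      (measurable_pi_lambda (fun ω i => X (Fin.castLE hi.le i) ω) fun i => hmeas _) hXset ?_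
    filter_upwards [hstep t hi] with ω hω
    obtain ⟨A, -, -, -, hAX, hκ⟩ := hω
    rw [hκ]
    exact ae_unifOn_mem_of_subset hXset hAX

theorem IsPureAdaptiveSearch.ae_mem_s4 (hX : IsPureAdaptiveSearch P Xset f n X)
    (hXset : MeasurableSet Xset) (i : Fin n) : ∀ᵐ ω ∂P, X i ω ∈ Xset := by
  obtain ⟨hmeas, hinit, hstep⟩ := hX
  obtain ⟨_ | t, hi⟩ := i
  · exact ae_of_ae_map (hmeas _).aemeasurable
      (hinit hi ▸ ae_unifOn_mem_of_subset hXset subset_rfl)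
  · refine ae_of_ae_condDistrib (hmeas _) (hmeas ⟨t, by omega⟩) hXset ?_
    filter_upwards [hstep t hi] with ω hκ
    rw [hκ]
    exact ae_unifOn_mem_of_subset hXset (sep_subset _ _)

theorem IsRankOptProcess.lintegral_iSup_succ_le (hX : IsRankOptProcess P Xset f n X)
    (hXset : MeasurableSet Xset) (hXset_top : volume Xset ≠ ∞) (hh : Measurable h)
    (hfh : ∀ x ∈ Xset, ∀ y ∈ Xset, f x ≤ f y ↔ h x ≤ h y) {ψ : ℝ → ℝ≥0∞} (hψ : Monotone ψ)
    {t : ℕ} (ht : t + 1 < n) :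
    ∫⁻ ω, ψ (⨆ i : Fin (t + 2), h (X (Fin.castLE ht i) ω)) ∂P
      ≤ ∫⁻ ω, levelAverage Xset h ψ (⨆ i : Fin (t + 1), h (X (Fin.castLE ht.le i) ω)) ∂P := by
  set W : Ω → Fin (t + 1) → Euc d := fun ω i => X (Fin.castLE ht.le i) ω
  have hW : Measurable W := measurable_pi_lambda _ fun i => hX.1 _
  have hg : Measurable fun p : (Fin (t + 1) → Euc d) × Euc d =>
      ψ (max (⨆ i, h (p.1 i)) (h p.2)) :=
    hψ.measurable.comp ((Measurable.iSup fun i =>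
      hh.comp ((measurable_pi_apply i).comp measurable_fst)).max (hh.comp measurable_snd))
  calc ∫⁻ ω, ψ (⨆ i : Fin (t + 2), h (X (Fin.castLE ht i) ω)) ∂P
      = ∫⁻ ω, ψ (max (⨆ i, h (W ω i)) (h (X ⟨t + 1, ht⟩ ω))) ∂P := by
        simp_rw [Fin.ciSup_eq_max_castSucc_last]
        rfl
    _ = ∫⁻ ω, ∫⁻ y, ψ (max (⨆ i, h (W ω i)) (h y)) ∂condDistrib (X ⟨t + 1, ht⟩) W P (W ω) ∂P :=
        lintegral_comp_condDistrib (hX.1 _) hW hg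
    _ ≤ ∫⁻ ω, levelAverage Xset h ψ (⨆ i, h (W ω i)) ∂P := by
        refine lintegral_mono_ae ?_
        filter_upwards [hX.2.2 t ht, ae_all_iff.2 fun i => hX.ae_mem_s4 hXset (Fin.castLE ht.le i)]
          with ω hω hmem
        obtain ⟨A, -, -, hA, hAX, hκ⟩ := hω
        rw [hκ]
        refine lintegral_unifOn_max_le_levelAverage hXset hXset_top hh hψ
          (fun x hx => hA ⟨hx.1, fun i => ?_⟩) hAX
        exact (hfh _ (hmem i) _ hx.1).2 ((Finite.le_ciSup (fun i => h (W ω i)) i).trans hx.2)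

theorem IsPureAdaptiveSearch.lintegral_succ_eq (hX : IsPureAdaptiveSearch P Xset f n X)
    (hXset : MeasurableSet Xset) (hh : Measurable h)
    (hfh : ∀ x ∈ Xset, ∀ y ∈ Xset, f x ≤ f y ↔ h x ≤ h y) {ψ : ℝ → ℝ≥0∞} (hψ : Measurable ψ)
    {t : ℕ} (ht : t + 1 < n) :
    ∫⁻ ω, ψ (h (X ⟨t + 1, ht⟩ ω)) ∂P
      = ∫⁻ ω, levelAverage Xset h ψ (h (X ⟨t, by omega⟩ ω)) ∂P := by
  refine (lintegral_comp_condDistrib (g := fun p => ψ (h p.2)) (hX.1 _)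
    (hX.1 ⟨t, by omega⟩) (hψ.comp (hh.comp measurable_snd))).trans (lintegral_congr_ae ?_)
  filter_upwards [hX.2.2 t ht, hX.ae_mem_s4 hXset ⟨t, by omega⟩] with ω hκ hmem
  have hlevel : {x ∈ Xset | f (X ⟨t, by omega⟩ ω) ≤ f x}
      = {x ∈ Xset | h (X ⟨t, by omega⟩ ω) ≤ h x} :=
    sep_ext_iff.2 fun x hx => hfh _ hmem x hx
  rw [hlevel] at hκ
  have : IsProbabilityMeasure (unifOn {x ∈ Xset | h (X ⟨t, by omega⟩ ω) ≤ h x}) := by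
    rw [← hκ]
    infer_instance
  rw [hκ, lintegral_unifOn,
    levelAverage_of_measure_ne_zero volume_ne_zero_of_isProbabilityMeasure_unifOn]

theorem IsRankOptProcess.lintegral_iSup_le_of_isPureAdaptiveSearch
    (hX : IsRankOptProcess P Xset f n X) (hX' : IsPureAdaptiveSearch P' Xset f n X')
    (hXset : MeasurableSet Xset) (hXset_top : volume Xset ≠ ∞) (hh : Measurable h)
    (hfh : ∀ x ∈ Xset, ∀ y ∈ Xset, f x ≤ f y ↔ h x ≤ h y) :
    ∀ {t : ℕ} (ht : t < n) {ψ : ℝ → ℝ≥0∞}, Monotone ψ →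
      ∫⁻ ω, ψ (⨆ i : Fin (t + 1), h (X (Fin.castLE ht i) ω)) ∂P
        ≤ ∫⁻ ω, ψ (h (X' ⟨t, ht⟩ ω)) ∂P'
  | 0, ht, ψ, hψ => le_of_eq <| by
    have hψh : Measurable (ψ ∘ h) := hψ.measurable.comp hh
    calc ∫⁻ ω, ψ (⨆ i : Fin 1, h (X (Fin.castLE ht i) ω)) ∂P
        = ∫⁻ ω, (ψ ∘ h) (X ⟨0, ht⟩ ω) ∂P := by
          simp only [ciSup_unique]
          rfl
      _ = ∫⁻ x, (ψ ∘ h) x ∂unifOn Xset := by rw [← hX.2.1 ht, lintegral_map hψh (hX.1 _)]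
      _ = ∫⁻ ω, ψ (h (X' ⟨0, ht⟩ ω)) ∂P' := by
          rw [← hX'.2.1 ht, lintegral_map hψh (hX'.1 _)]
          rfl
  | t + 1, ht, ψ, hψ =>
    calc _ ≤ _ := hX.lintegral_iSup_succ_le hXset hXset_top hh hfh hψ ht
      _ ≤ _ := hX.lintegral_iSup_le_of_isPureAdaptiveSearch hX' hXset hXset_top hh hfh
          (Nat.lt_of_succ_lt ht) (monotone_levelAverage hXset hXset_top hh hψ)
      _ = _ := (hX'.lintegral_succ_eq hXset hh hfh hψ.measurable ht).symm

end Processes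

/-- **Proposition 7 of the paper**: a RankOpt-type process is stochastically dominated by a
Pure Adaptive Search with the same number of evaluations:
`P(max_i f(X_i) ≥ y) ≤ P(f(X⋆_n) ≥ y)`. -/
theorem rankopt_dominated_by_pas
    {d : ℕ} {Xset : Set (Euc d)} (hXcomp : IsCompact Xset)
    {f : Euc d → ℝ} (hf : HasContinuousRanking Xset f)
    {Ω : Type*} [MeasurableSpace Ω] {P : Measure Ω} [IsProbabilityMeasure P]
    {Ω' : Type*} [MeasurableSpace Ω'] {P' : Measure Ω'} [IsProbabilityMeasure P']
    {n : ℕ} (hn : 0 < n) {X : Fin n → Ω → Euc d}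
    (hproc : IsRankOptProcess P Xset f n X)
    {Xstar : Fin n → Ω' → Euc d} (hpas : IsPureAdaptiveSearch P' Xset f n Xstar)
    (y : ℝ) :
    P {ω | ∃ i : Fin n, y ≤ f (X i ω)}
      ≤ P' {ω' | y ≤ f (Xstar ⟨n - 1, by omega⟩ ω')} := by
  have hXset := hXcomp.measurableSet
  obtain ⟨h, hh, hfh⟩ := hf.exists_measurable_le_iff hXset
  set U := upperClosure (h '' {z ∈ Xset | y ≤ f z})
  have hn' : n - 1 < n := by omega
  set M := fun ω => ⨆ i : Fin (n - 1 + 1), h (X (Fin.castLE hn' i) ω)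
  have hU : MeasurableSet (U : Set ℝ) := U.upper.ordConnected.measurableSet
  have hM : Measurable M := Measurable.iSup fun i => hh.comp (hproc.1 _)
  have key := hproc.lintegral_iSup_le_of_isPureAdaptiveSearch hpas hXset
    hXcomp.measure_lt_top.ne hh hfh hn' (U.upper.monotone_indicator zero_le_one)
  rw [lintegral_indicator_const_comp hM hU,
    lintegral_indicator_const_comp (f := fun ω => h (Xstar ⟨n - 1, hn'⟩ ω)) (hh.comp (hpas.1 _)) hU,
    one_mul, one_mul] at key
  refine le_trans (measure_mono_ae ?_) (key.trans (measure_mono_ae ?_))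
  · filter_upwards [ae_all_iff.2 (hproc.ae_mem_s4 hXset)] with ω hmem ⟨i, hi⟩
    refine mem_upperClosure.2 ⟨h (X i ω), ⟨X i ω, ⟨hmem i, hi⟩, rfl⟩, ?_⟩
    exact Finite.le_ciSup (fun j : Fin (n - 1 + 1) => h (X (Fin.castLE hn' j) ω)) ⟨i, by omega⟩
  · filter_upwards [hpas.ae_mem_s4 hXset ⟨n - 1, hn'⟩] with ω hmem hω
    obtain ⟨_, ⟨z, ⟨hz, hyz⟩, rfl⟩, hzω⟩ := mem_upperClosure.1 hω
    exact hyz.trans ((hfh z hz _ hmem).2 hzω)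
end

section
/- Let X ⊂ ℝ^d, k ≥ 1, and let (X_1, f(X_1)), …, (X_{t+1}, f(X_{t+1})) be a sample of t+1 evaluations of f : X → ℝ with pairwise distinct values, ordered so that f(X_{(1)}) < ⋯ < f(X_{(t+1)}). Then there exists a polynomial function h : ℝ^d → ℝ of total degree at most k with sgn(h(X_i)−h(X_j)) = sgn(f(X_i)−f(X_j)) for all i, j, if and only if the polyhedral set {λ ∈ ℝ^t : M^{Φ_k}_t λᵀ = 0, ⟨1, λ⟩ = 1, λ ⪰ 0} is empty, where M^{Φ_k}_t is the D×t matrix whose i-th column is Φ_k(X_{(i+1)}) − Φ_k(X_{(i)}); equivalently, the zero vector does not belong to the convex hull of {Φ_k(X_{(i+1)}) − Φ_k(X_{(i)}) : 1 ≤ i ≤ t}. -/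
open MeasureTheory ProbabilityTheory Set
open scoped ENNReal NNReal BigOperators

noncomputable section

/-!
A polynomial of total degree at most `k` is, up to its constant term, a linear functional
applied to the feature vector `Φ_k(x)`. Since `f` is strictly increasing along the sample, such a
polynomial ranks the sample like `f` iff it increases between consecutive points, i.e. iff the
functional is positive on every difference `Φ_k(X_{i+1}) - Φ_k(X_i)`. By Gordan's alternative
(Hahn–Banach separation of `0` from the compact convex hull of these differences) such a functional
exists iff `0` is not a convex combination of them.
-/

open Finset

theorem forall_sign_sub_eq_iff_strictMono {ι : Type*} [LinearOrder ι] {f g : ι → ℝ}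
    (hf : StrictMono f) :
    (∀ i j, Real.sign (g i - g j) = Real.sign (f i - f j)) ↔ StrictMono g := by
  refine ⟨fun hfg i j hij => ?_, fun hg i j => ?_⟩
  · have h := hfg j i
    rw [Real.sign_of_pos (sub_pos.2 (hf hij)), Real.sign] at h
    split_ifs at h <;> linarith
  · rcases lt_trichotomy i j with h | rfl | h
    · rw [Real.sign_of_neg (sub_neg.2 (hg h)), Real.sign_of_neg (sub_neg.2 (hf h))]
    · simp
    · rw [Real.sign_of_pos (sub_pos.2 (hg h)), Real.sign_of_pos (sub_pos.2 (hf h))]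

/-- Gordan's theorem of the alternative. -/
theorem exists_forall_pos_iff_not_exists_stdSimplex {ι E : Type*} [Fintype ι] [AddCommGroup E]
    [Module ℝ E] [TopologicalSpace E] [IsTopologicalAddGroup E] [ContinuousSMul ℝ E]
    [LocallyConvexSpace ℝ E] [T2Space E] (v : ι → E) :
    (∃ φ : StrongDual ℝ E, ∀ i, 0 < φ (v i)) ↔
      ¬ ∃ w ∈ stdSimplex ℝ ι, ∑ i, w i • v i = 0 := by
  constructor
  · rintro ⟨φ, hφ⟩ ⟨w, ⟨hw₀, hw₁⟩, hw⟩
    obtain ⟨i, -, hi⟩ :=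
      exists_lt_of_sum_lt (s := Finset.univ) (f := 0) (g := w) (by simp [hw₁])
    have hpos : 0 < φ (∑ i, w i • v i) := by
      simp only [map_sum, map_smul, smul_eq_mul]
      exact sum_pos' (fun j _ => mul_nonneg (hw₀ j) (hφ j).le) ⟨i, mem_univ i, mul_pos hi (hφ i)⟩
    simp [hw] at hpos
  · classical
    intro h
    set L : (ι → ℝ) →ₗ[ℝ] E := Fintype.linearCombination ℝ v
    have h0 : (0 : E) ∉ L '' stdSimplex ℝ ι := by
      rintro ⟨w, hw, hw0⟩
      exact h ⟨w, hw, by simpa [L, Fintype.linearCombination_apply] using hw0⟩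
    obtain ⟨φ, u, hu, hφ⟩ := geometric_hahn_banach_point_closed
      ((convex_stdSimplex ℝ ι).linear_image L)
      ((isCompact_stdSimplex ℝ ι).image L.continuous_of_finiteDimensional).isClosed h0
    rw [map_zero] at hu
    refine ⟨φ, fun i => hu.trans (hφ _ ⟨Pi.single i 1, single_mem_stdSimplex ℝ i, ?_⟩)⟩
    simp [L, Fintype.linearCombination_apply]

def polyFeatureMap {d : ℕ} (k : ℕ) (x : Fin d → ℝ) : MonIdx d k → ℝ := fun a => monFeature a x

section Polynomial

variable {d k : ℕ}

namespace MonIdx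

def toFinsupp (a : MonIdx d k) : Fin d →₀ ℕ :=
  Finsupp.equivFunOnFinite.symm fun i => (a.1 i : ℕ)

@[simp]
theorem toFinsupp_apply (a : MonIdx d k) (i : Fin d) : a.toFinsupp i = a.1 i := rfl

theorem toFinsupp_injective : Function.Injective (toFinsupp (d := d) (k := k)) :=
  fun a b h => Subtype.ext <| funext fun i => Fin.ext <| by simpa using DFunLike.congr_fun h i

theorem toFinsupp_ne_zero (a : MonIdx d k) : a.toFinsupp ≠ 0 := by
  intro h
  have h₁ := a.2.1
  simp [← toFinsupp_apply, h] at h₁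

theorem exists_toFinsupp_eq {m : Fin d →₀ ℕ} (hm : m ≠ 0) (hdeg : m.degree ≤ k) :
    ∃ a : MonIdx d k, a.toFinsupp = m := by
  rw [Finsupp.degree_eq_sum] at hdeg
  have hle : ∀ i, m i ≤ ∑ j, m j := fun i =>
    single_le_sum (fun j _ => Nat.zero_le (m j)) (mem_univ i)
  have hpos : 1 ≤ ∑ i, m i := by
    by_contra! h
    exact hm (Finsupp.ext fun i => by have := hle i; simp; omega)
  exact ⟨⟨fun i => ⟨m i, by have := hle i; omega⟩, by simpa using hpos, by simpa using hdeg⟩,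
    Finsupp.ext fun i => rfl⟩

end MonIdx

theorem monFeature_eq_prod (a : MonIdx d k) (x : Fin d → ℝ) :
    monFeature a x = ∏ i, x i ^ a.toFinsupp i := rfl

namespace MvPolynomial

theorem eval_eq_coeff_zero_add_sum_monFeature {P : MvPolynomial (Fin d) ℝ}
    (hP : P.totalDegree ≤ k) (x : Fin d → ℝ) :
    eval x P = P.coeff 0 + ∑ a : MonIdx d k, P.coeff a.toFinsupp * monFeature a x := by
  classical
  have hsupp : P.support ⊆ insert 0 (Finset.univ.image (MonIdx.toFinsupp (k := k))) := by
    intro m hm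
    rcases eq_or_ne m 0 with rfl | hm0
    · exact mem_insert_self _ _
    obtain ⟨a, rfl⟩ := MonIdx.exists_toFinsupp_eq hm0 ((le_totalDegree hm).trans hP)
    exact mem_insert_of_mem (mem_image_of_mem _ (mem_univ a))
  have h0 : (0 : Fin d →₀ ℕ) ∉ Finset.univ.image (MonIdx.toFinsupp (k := k)) := by
    simpa [eq_comm] using MonIdx.toFinsupp_ne_zero
  rw [eval_eq', sum_subset hsupp fun m _ hm => by rw [notMem_support_iff.1 hm, zero_mul],
    sum_insert h0, sum_image fun a _ b _ h => MonIdx.toFinsupp_injective h]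
  simp [monFeature_eq_prod]

theorem exists_strongDual_eval_eq {P : MvPolynomial (Fin d) ℝ} (hP : P.totalDegree ≤ k) :
    ∃ φ : StrongDual ℝ (MonIdx d k → ℝ), ∀ x, eval x P = P.coeff 0 + φ (polyFeatureMap k x) :=
  ⟨∑ a, P.coeff a.toFinsupp • ContinuousLinearMap.proj a, fun x => by
    simp [eval_eq_coeff_zero_add_sum_monFeature hP x, polyFeatureMap]⟩

theorem exists_totalDegree_le_eval_eq (φ : StrongDual ℝ (MonIdx d k → ℝ)) :
    ∃ P : MvPolynomial (Fin d) ℝ, P.totalDegree ≤ k ∧ ∀ x, eval x P = φ (polyFeatureMap k x) := by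
  classical
  refine ⟨∑ a, monomial a.toFinsupp (φ (Pi.single a 1)), ?_, fun x => ?_⟩
  · refine (totalDegree_finsetSum _ _).trans (Finset.sup_le fun a _ => ?_)
    refine (totalDegree_monomial_le _ _).trans ?_
    simpa [Finsupp.sum_fintype] using a.2.2
  · conv_rhs => rw [pi_eq_sum_univ' (polyFeatureMap k x)]
    simp [eval_monomial, Finsupp.prod_fintype, monFeature_eq_prod, polyFeatureMap, mul_comm]

theorem exists_totalDegree_le_forall_eval_lt_iff {ι : Type*} (y z : ι → Fin d → ℝ) :
    (∃ P : MvPolynomial (Fin d) ℝ, P.totalDegree ≤ k ∧ ∀ i, eval (y i) P < eval (z i) P) ↔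
      ∃ φ : StrongDual ℝ (MonIdx d k → ℝ),
        ∀ i, 0 < φ (polyFeatureMap k (z i) - polyFeatureMap k (y i)) := by
  refine ⟨fun ⟨P, hP, hyz⟩ => ?_, fun ⟨φ, hφ⟩ => ?_⟩
  · obtain ⟨φ, hφ⟩ := exists_strongDual_eval_eq hP
    exact ⟨φ, fun i => by simpa [hφ, map_sub] using hyz i⟩
  · obtain ⟨P, hP, hφP⟩ := exists_totalDegree_le_eval_eq φ
    exact ⟨P, hP, fun i => by simpa [hφP, map_sub] using hφ i⟩

end MvPolynomial

end Polynomial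

theorem polynomial_ranking_polyhedron_general
    {d k t : ℕ} (f : (Fin d → ℝ) → ℝ)
    (X : Fin (t + 1) → Fin d → ℝ)
    (hord : StrictMono fun i => f (X i)) :
    (∃ P : MvPolynomial (Fin d) ℝ, P.totalDegree ≤ k ∧
      ∀ i j : Fin (t + 1),
        Real.sign (MvPolynomial.eval (X i) P - MvPolynomial.eval (X j) P)
          = Real.sign (f (X i) - f (X j)))
    ↔ ¬ ∃ lam : Fin t → ℝ,
        (∀ a : MonIdx d k,
          ∑ i : Fin t,
            lam i * (monFeature a (X i.succ) - monFeature a (X i.castSucc)) = 0) ∧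
        (∑ i : Fin t, lam i = 1) ∧ (∀ i, 0 ≤ lam i) := by
  simp_rw [forall_sign_sub_eq_iff_strictMono hord, Fin.strictMono_iff_lt_succ]
  have hpoly := MvPolynomial.exists_totalDegree_le_forall_eval_lt_iff (k := k)
    (fun i : Fin t => X i.castSucc) fun i => X i.succ
  have hgordan := exists_forall_pos_iff_not_exists_stdSimplex
    fun i : Fin t => polyFeatureMap k (X i.succ) - polyFeatureMap k (X i.castSucc)
  rw [hpoly, hgordan]
  refine not_congr (exists_congr fun w => ?_)
  simp only [stdSimplex, mem_ofPred_eq, funext_iff, Finset.sum_apply, Pi.smul_apply, smul_eq_mul,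
    Pi.sub_apply, Pi.zero_apply, polyFeatureMap]
  tauto

/-- **Corollary 17 of the paper**: a sample with pairwise distinct values can be perfectly
ranked by a polynomial of total degree at most `k` iff the associated polyhedral set
`{λ : M λᵀ = 0, ⟨1,λ⟩ = 1, λ ⪰ 0}` is empty. -/
theorem polynomial_ranking_polyhedron
    {d k t : ℕ} (hk : 1 ≤ k) {Xset : Set (Fin d → ℝ)} (f : (Fin d → ℝ) → ℝ)
    (X : Fin (t + 1) → Fin d → ℝ) (hX : ∀ i, X i ∈ Xset)
    (hord : StrictMono fun i => f (X i)) :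
    (∃ P : MvPolynomial (Fin d) ℝ, P.totalDegree ≤ k ∧
      ∀ i j : Fin (t + 1),
        Real.sign (MvPolynomial.eval (X i) P - MvPolynomial.eval (X j) P)
          = Real.sign (f (X i) - f (X j)))
    ↔ ¬ ∃ lam : Fin t → ℝ,
        (∀ a : MonIdx d k,
          ∑ i : Fin t,
            lam i * (monFeature a (X i.succ) - monFeature a (X i.castSucc)) = 0) ∧
        (∑ i : Fin t, lam i = 1) ∧ (∀ i, 0 ≤ lam i) :=
  polynomial_ranking_polyhedron_general f X hord
end
end
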